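/- arXiv:2308.08369 — 2 statements merged into one kernel-verified Lean document; each statement's English description precedes it below -/
import Mathlib

section
/- Let R be a commutative ring, M an R-module, n a natural number, and e₁,…,eₙ,f₁,…,fₙ elements of M. In the exterior algebra ⋀M = ExteriorAlgebra R M, writing ι : M → ⋀M for the canonical inclusion, the degree-two element ω = ∑ᵢ₌₁ⁿ ι(eᵢ) * ι(fᵢ) satisfies ωⁿ = n! • (ι(e₁) * ι(f₁) * ι(e₂) * ι(f₂) * ⋯ * ι(eₙ) * ι(fₙ)). -/
open ExteriorAlgebra

section Aux

variable {A : Type*} [Ring A]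

lemma aux_prod_mul_self_eq_zero (l : List A) (a : A)
    (hc : ∀ b ∈ l, Commute a b) (hs : a * a = 0) (ha : a ∈ l) :
    l.prod * a = 0 := by
  induction l with
  | nil => simp at ha
  | cons b t ih =>
    have hct : Commute a t.prod :=
      Commute.list_prod_right _ _ (fun c hc' => hc c (List.mem_cons_of_mem _ hc'))
    rcases List.mem_cons.mp ha with rfl | hat
    · rw [List.prod_cons, mul_assoc, ← hct.eq, ← mul_assoc, hs, zero_mul]
    · rw [List.prod_cons, mul_assoc,
        ih (fun c hc' => hc c (List.mem_cons_of_mem _ hc')) hat, mul_zero]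

lemma aux_sum_pow_list (l : List A)
    (hc : ∀ a ∈ l, ∀ b ∈ l, Commute a b) (hs : ∀ a ∈ l, a * a = 0) :
    l.sum ^ l.length = l.length.factorial • l.prod := by
  induction l with
  | nil => simp
  | cons a t ih =>
    have hmem : ∀ b ∈ t, b ∈ a :: t := fun b hb => List.mem_cons_of_mem _ hb
    have hct : Commute a t.sum :=
      Commute.list_sum_right _ _ (fun c hc' => hc a List.mem_cons_self c (hmem c hc'))
    have hT : t.sum ^ t.length = t.length.factorial • t.prod :=
      ih (fun x hx y hy => hc x (hmem x hx) y (hmem y hy)) (fun x hx => hs x (hmem x hx))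
    have hPz : ∀ b ∈ t, t.prod * b = 0 := fun b hb =>
      aux_prod_mul_self_eq_zero t b
        (fun c hc' => hc b (hmem b hb) c (hmem c hc')) (hs b (hmem b hb)) hb
    have hPS : t.prod * t.sum = 0 := by
      have key : ∀ l' : List A, (∀ b ∈ l', t.prod * b = 0) → t.prod * l'.sum = 0 := by
        intro l' h
        induction l' with
        | nil => simp
        | cons c u ihu =>
          rw [List.sum_cons, mul_add, h c List.mem_cons_self,
            ihu (fun b hb => h b (List.mem_cons_of_mem _ hb)), add_zero]
      exact key t hPz
    have hTz : t.sum ^ (t.length + 1) = 0 := by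
      rw [pow_succ, hT, smul_mul_assoc, hPS, smul_zero]
    have haz : a * a = 0 := hs a List.mem_cons_self
    rw [List.sum_cons, List.length_cons, hct.add_pow]
    rw [Finset.sum_eq_single 1]
    · rw [pow_one, Nat.succ_sub_one, hT, Nat.choose_one_right, List.prod_cons,
        mul_smul_comm, smul_mul_assoc, ← (Nat.cast_commute (t.length + 1) (a * t.prod)).eq,
        ← nsmul_eq_mul, smul_smul, Nat.factorial_succ, Nat.mul_comm]
    · intro k hk hk1
      rcases Nat.lt_or_ge k 2 with h2 | h2
      · interval_cases k
        · rw [pow_zero, one_mul, Nat.sub_zero, hTz, zero_mul]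
        · exact absurd rfl hk1
      · obtain ⟨m, rfl⟩ := Nat.exists_eq_add_of_le h2
        simp [pow_add, pow_two, haz]
    · intro h
      exact absurd (Finset.mem_range.mpr (by omega)) h

end Aux

/-- For `ω = ∑ᵢ ι(eᵢ) * ι(fᵢ)` in the exterior algebra,
`ωⁿ = n! • (ι(e₁)ι(f₁) ⋯ ι(eₙ)ι(fₙ))`. -/
theorem exteriorAlgebra_sum_pow_eq_factorial_smul_prod
    (R : Type*) [CommRing R] (M : Type*) [AddCommGroup M] [Module R M]
    (n : ℕ) (e f : Fin n → M) :
    (∑ i : Fin n, ι R (e i) * ι R (f i)) ^ n =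
      n.factorial • (List.ofFn fun i : Fin n => ι R (e i) * ι R (f i)).prod := by
  have hswap : ∀ x y : M, ι R x * ι R y = -(ι R y * ι R x) := fun x y =>
    eq_neg_of_add_eq_zero_left (ι_add_mul_swap x y)
  have h : ∀ u v w' : M, Commute (ι R u) (ι R v * ι R w') := by
    intro u v w'
    show ι R u * (ι R v * ι R w') = (ι R v * ι R w') * ι R u
    rw [← mul_assoc, hswap u v, neg_mul, mul_assoc, hswap u w', mul_neg, neg_neg,
      ← mul_assoc]
  have hcomm : ∀ x y z w : M,
      Commute (ι R x * ι R y) (ι R z * ι R w) := fun x y z w =>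
    (h x z w).mul_left (h y z w)
  have hsq : ∀ x y : M, (ι R x * ι R y) * (ι R x * ι R y) = 0 := by
    intro x y
    rw [mul_assoc, ← mul_assoc (ι R y), hswap y x, neg_mul, mul_neg, mul_assoc,
      ι_sq_zero, mul_zero, mul_zero, neg_zero]
  have key := aux_sum_pow_list (A := ExteriorAlgebra R M)
    (List.ofFn fun i : Fin n => ι R (e i) * ι R (f i))
    (by
      intro a ha b hb
      obtain ⟨i, rfl⟩ := List.mem_ofFn.mp ha
      obtain ⟨j, rfl⟩ := List.mem_ofFn.mp hb
      exact hcomm _ _ _ _)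
    (by
      intro a ha
      obtain ⟨i, rfl⟩ := List.mem_ofFn.mp ha
      exact hsq _ _)
  simpa [List.sum_ofFn] using key
end

section
/- Let K be a field, V a finite-dimensional K-vector space, B a nondegenerate symmetric bilinear form on V, and P ⊆ V a subspace containing its B-orthogonal complement P^⊥ = {v ∈ V : B(v, p) = 0 for all p ∈ P}. Define α : P → V × (P / P^⊥) by α(p) = (p, p + P^⊥), and define β : V × (P / P^⊥) → P* (the dual space of P) by β(v, q + P^⊥) = the restriction to P of B(v, −) − B(q, −) for q ∈ P (this is well defined since B(P^⊥, P) = 0). Then α is injective, β is surjective, the composite β ∘ α is zero, and the kernel of β equals the range of α; i.e., 0 → P → V ⊕ (P/P^⊥) → P* → 0 is a short exact sequence. -/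
open LinearMap (BilinForm)

/-- Let `B` be a nondegenerate symmetric bilinear form on a finite-dimensional
vector space `V` and `P ⊆ V` a subspace containing its orthogonal `P^⊥`.
With `α : P → V × (P/P^⊥)`, `α(p) = (p, [p])`, and any linear
`β : V × (P/P^⊥) → P*` satisfying `β(v, [q])(p) = B(v,p) − B(q,p)`, the
sequence `0 → P → V ⊕ (P/P^⊥) → P* → 0` is short exact. -/
theorem parabolic_short_exact
    (K : Type*) [Field K] (V : Type*) [AddCommGroup V] [Module K V]
    [FiniteDimensional K V] (B : LinearMap.BilinForm K V)
    (hsymm : LinearMap.IsSymm B)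
    (hnd : LinearMap.BilinForm.Nondegenerate B)
    (P : Submodule K V)
    (hP : LinearMap.BilinForm.orthogonal B P ≤ P)
    (β : V × (↥P ⧸ (LinearMap.BilinForm.orthogonal B P).comap P.subtype)
        →ₗ[K] Module.Dual K ↥P)
    (hβ : ∀ (v : V) (q : ↥P) (p : ↥P),
      β (v, Submodule.Quotient.mk q) p = B v ↑p - B ↑q ↑p) :
    Function.Injective
        (P.subtype.prod
          ((LinearMap.BilinForm.orthogonal B P).comap P.subtype).mkQ) ∧
      Function.Surjective β ∧
      β.comp
          (P.subtype.prod
            ((LinearMap.BilinForm.orthogonal B P).comap P.subtype).mkQ) = 0 ∧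
      LinearMap.ker β =
        LinearMap.range
          (P.subtype.prod
            ((LinearMap.BilinForm.orthogonal B P).comap P.subtype).mkQ) := by
  refine ⟨?_, ?_, ?_, ?_⟩
  · intro x y h
    exact Subtype.ext (congrArg Prod.fst h)
  · intro f
    obtain ⟨g, hg⟩ := Subspace.dualRestrict_surjective (W := P) f
    refine ⟨((B.toDual hnd).symm g, Submodule.Quotient.mk 0), ?_⟩
    ext p
    rw [hβ]
    simp only [Submodule.coe_zero, map_zero, LinearMap.zero_apply, sub_zero]
    rw [LinearMap.BilinForm.apply_toDual_symm_apply]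
    have := DFunLike.congr_fun hg p
    simpa using this
  · apply LinearMap.ext; intro p
    apply LinearMap.ext; intro p'
    simp [hβ]
  · ext x
    obtain ⟨v, qbar⟩ := x
    obtain ⟨q, rfl⟩ := Submodule.Quotient.mk_surjective _ qbar
    simp only [LinearMap.mem_ker, LinearMap.mem_range]
    constructor
    · intro h
      have hvq : v - ↑q ∈ LinearMap.BilinForm.orthogonal B P := by
        rw [LinearMap.BilinForm.mem_orthogonal_iff]
        intro n hn
        have := DFunLike.congr_fun h ⟨n, hn⟩
        rw [hβ] at this
        simp only [LinearMap.zero_apply] at this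
        have h2 : B (v - ↑q) n = 0 := by
          rw [map_sub, LinearMap.sub_apply]
          exact this
        rw [← hsymm.eq]
        simpa using h2
      have hv : v ∈ P := by
        have : v - ↑q ∈ P := hP hvq
        simpa using P.add_mem this q.2
      refine ⟨⟨v, hv⟩, ?_⟩
      simp only [LinearMap.prod_apply, Function.prod, Submodule.mkQ_apply,
        Submodule.subtype_apply]
      refine Prod.ext rfl ?_
      rw [Submodule.Quotient.eq]
      simpa using hvq
    · rintro ⟨p, hp⟩
      rw [← hp]
      simp only [LinearMap.prod_apply, Function.prod, Submodule.mkQ_apply,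
        Submodule.subtype_apply]
      apply LinearMap.ext; intro p'
      simp [hβ]
end
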